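/- For all y > 0 one has b*_{r+q} < b*_r < b*(y); that is, the distress-dependent dividend boundary b*(y) = y + Δ(y) strictly exceeds the classical boundary b*_r, which in turn strictly exceeds b*_{r+q}. -/

import Mathlib

open Real Set Filter

noncomputable def gam1 (μ σ ρ : ℝ) : ℝ := Real.sqrt (μ^2/σ^4 + 2*ρ/σ^2) - μ/σ^2

noncomputable def gam2 (μ σ ρ : ℝ) : ℝ := -Real.sqrt (μ^2/σ^4 + 2*ρ/σ^2) - μ/σ^2

/-- The classical optimal dividend boundary `b*_ρ`. -/
noncomputable def bstar (μ σ ρ : ℝ) : ℝ :=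
  Real.log ((gam2 μ σ ρ)^2 / (gam1 μ σ ρ)^2) / (gam1 μ σ ρ - gam2 μ σ ρ)

/-- The classical value function `V_ρ`. -/
noncomputable def Vfun (μ σ ρ x : ℝ) : ℝ :=
  if x < bstar μ σ ρ then
    (Real.exp (gam1 μ σ ρ * x) - Real.exp (gam2 μ σ ρ * x)) /
      (gam1 μ σ ρ * Real.exp (gam1 μ σ ρ * bstar μ σ ρ) -
        gam2 μ σ ρ * Real.exp (gam2 μ σ ρ * bstar μ σ ρ))
  else
    (Real.exp (gam1 μ σ ρ * bstar μ σ ρ) - Real.exp (gam2 μ σ ρ * bstar μ σ ρ)) /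
      (gam1 μ σ ρ * Real.exp (gam1 μ σ ρ * bstar μ σ ρ) -
        gam2 μ σ ρ * Real.exp (gam2 μ σ ρ * bstar μ σ ρ)) + x - bstar μ σ ρ

/-- `δ(y) = e^{γ₁(r+q)y} − e^{γ₂(r+q)y}`. -/
noncomputable def del (μ σ r q y : ℝ) : ℝ :=
  Real.exp (gam1 μ σ (r+q) * y) - Real.exp (gam2 μ σ (r+q) * y)

/-- `δ'(y)`. -/
noncomputable def delP (μ σ r q y : ℝ) : ℝ :=
  gam1 μ σ (r+q) * Real.exp (gam1 μ σ (r+q) * y) -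
    gam2 μ σ (r+q) * Real.exp (gam2 μ σ (r+q) * y)

/-- `δ''(y)`. -/
noncomputable def delPP (μ σ r q y : ℝ) : ℝ :=
  (gam1 μ σ (r+q))^2 * Real.exp (gam1 μ σ (r+q) * y) -
    (gam2 μ σ (r+q))^2 * Real.exp (gam2 μ σ (r+q) * y)

/-- `y_u := b*_{r+q} + μ/r − μ/(r+q)`. -/
noncomputable def yUpper (μ σ r q : ℝ) : ℝ := bstar μ σ (r+q) + μ/r - μ/(r+q)

/-- `Δ(y)`. -/
noncomputable def DeltaF (μ σ r q y : ℝ) : ℝ :=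
  (1/(gam1 μ σ r - gam2 μ σ r)) *
    Real.log ((gam2 μ σ r)^2 * (delP μ σ r q y - gam1 μ σ r * del μ σ r q y) /
      ((gam1 μ σ r)^2 * (delP μ σ r q y - gam2 μ σ r * del μ σ r q y)))

/-- `b*(y) = y + Δ(y)`. -/
noncomputable def bstarY (μ σ r q y : ℝ) : ℝ := y + DeltaF μ σ r q y

noncomputable def psiF (μ σ ρ x : ℝ) : ℝ := Real.exp (gam1 μ σ ρ * x)
noncomputable def phiF (μ σ ρ x : ℝ) : ℝ := Real.exp (gam2 μ σ ρ * x)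
noncomputable def psiP (μ σ ρ x : ℝ) : ℝ := gam1 μ σ ρ * Real.exp (gam1 μ σ ρ * x)
noncomputable def phiP (μ σ ρ x : ℝ) : ℝ := gam2 μ σ ρ * Real.exp (gam2 μ σ ρ * x)

/-- `η(y;b) = ψ'_r(b)φ_r(y) − φ'_r(b)ψ_r(y)`. -/
noncomputable def etaF (μ σ r y b : ℝ) : ℝ :=
  psiP μ σ r b * phiF μ σ r y - phiP μ σ r b * psiF μ σ r y

/-- `η'(y;b)` (derivative in `y`). -/
noncomputable def etaP (μ σ r y b : ℝ) : ℝ :=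
  psiP μ σ r b * phiP μ σ r y - phiP μ σ r b * psiP μ σ r y

/-- `K₁(y)`. -/
noncomputable def K1 (μ σ r q y : ℝ) : ℝ :=
  (psiF μ σ r y * etaP μ σ r y (bstarY μ σ r q y) -
    psiP μ σ r y * etaF μ σ r y (bstarY μ σ r q y)) /
  (psiP μ σ r (bstarY μ σ r q y) *
    (del μ σ r q y * etaP μ σ r y (bstarY μ σ r q y) -
      delP μ σ r q y * etaF μ σ r y (bstarY μ σ r q y)))

/-- `K₂(y) = −K₁(y)`. -/
noncomputable def K2 (μ σ r q y : ℝ) : ℝ := -K1 μ σ r q y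

/-- `K₃(y)`. -/
noncomputable def K3 (μ σ r q y : ℝ) : ℝ :=
  (phiP μ σ r (bstarY μ σ r q y) *
      (del μ σ r q y * psiP μ σ r y - delP μ σ r q y * psiF μ σ r y) +
    del μ σ r q y * etaP μ σ r y (bstarY μ σ r q y) -
      delP μ σ r q y * etaF μ σ r y (bstarY μ σ r q y)) /
  (psiP μ σ r (bstarY μ σ r q y) *
    (del μ σ r q y * etaP μ σ r y (bstarY μ σ r q y) -
      delP μ σ r q y * etaF μ σ r y (bstarY μ σ r q y)))

/-- `K₄(y)`. -/
noncomputable def K4 (μ σ r q y : ℝ) : ℝ :=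
  (psiF μ σ r y * delP μ σ r q y - psiP μ σ r y * del μ σ r q y) /
  (del μ σ r q y * etaP μ σ r y (bstarY μ σ r q y) -
    delP μ σ r q y * etaF μ σ r y (bstarY μ σ r q y))

/-- The candidate value function `w(·;y)` in the subcritical regime. -/
noncomputable def wfun (μ σ r q y x : ℝ) : ℝ :=
  if x < y then
    K1 μ σ r q y * Real.exp (gam1 μ σ (r+q) * x) + K2 μ σ r q y * Real.exp (gam2 μ σ (r+q) * x)
  else if x < bstarY μ σ r q y then
    K3 μ σ r q y * Real.exp (gam1 μ σ r * x) + K4 μ σ r q y * Real.exp (gam2 μ σ r * x)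
  else
    K3 μ σ r q y * Real.exp (gam1 μ σ r * bstarY μ σ r q y) +
      K4 μ σ r q y * Real.exp (gam2 μ σ r * bstarY μ σ r q y) + x - bstarY μ σ r q y

/-- The function `f` characterising the critical level `y_l`. -/
noncomputable def fF (μ σ r q y : ℝ) : ℝ :=
  (-(gam1 μ σ r / gam2 μ σ r) * delP μ σ r q y + gam1 μ σ r * del μ σ r q y) *
    ((gam2 μ σ r)^2/(gam1 μ σ r)^2 *
      ((delP μ σ r q y - gam1 μ σ r * del μ σ r q y) /
        (delP μ σ r q y - gam2 μ σ r * del μ σ r q y)))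
      ^ (gam1 μ σ r / (gam1 μ σ r - gam2 μ σ r))
  - delP μ σ r q (bstar μ σ (r+q))

noncomputable def e1F (μ σ r q b : ℝ) : ℝ :=
  (phiF μ σ (r+q) b - phiP μ σ (r+q) b * Vfun μ σ (r+q) b) /
  (psiP μ σ (r+q) b * phiF μ σ (r+q) b - psiF μ σ (r+q) b * phiP μ σ (r+q) b)

noncomputable def e2F (μ σ r q b : ℝ) : ℝ :=
  (psiP μ σ (r+q) b * Vfun μ σ (r+q) b - psiF μ σ (r+q) b) /
  (psiP μ σ (r+q) b * phiF μ σ (r+q) b - psiF μ σ (r+q) b * phiP μ σ (r+q) b)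

noncomputable def e3F (μ σ r q b y : ℝ) : ℝ :=
  (e1F μ σ r q b * (phiF μ σ r y * psiP μ σ (r+q) y - phiP μ σ r y * psiF μ σ (r+q) y) +
    e2F μ σ r q b * (phiF μ σ r y * phiP μ σ (r+q) y - phiP μ σ r y * phiF μ σ (r+q) y)) /
  (psiP μ σ r y * phiF μ σ r y - psiF μ σ r y * phiP μ σ r y)

noncomputable def e4F (μ σ r q b y : ℝ) : ℝ :=
  (e1F μ σ r q b * (psiP μ σ r y * psiF μ σ (r+q) y - psiF μ σ r y * psiP μ σ (r+q) y) +
    e2F μ σ r q b * (psiP μ σ r y * phiF μ σ (r+q) y - psiF μ σ r y * phiP μ σ (r+q) y)) /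
  (psiP μ σ r y * phiF μ σ r y - psiF μ σ r y * phiP μ σ r y)

/-- The function `H(b,y)` from the critical regime. -/
noncomputable def Hfun (μ σ r q b y : ℝ) : ℝ :=
  (gam1 μ σ r - gam2 μ σ r) *
    (-gam2 μ σ r / gam1 μ σ r) ^ ((gam1 μ σ r + gam2 μ σ r)/(gam1 μ σ r - gam2 μ σ r)) *
    (e3F μ σ r q b y) ^ (-gam2 μ σ r/(gam1 μ σ r - gam2 μ σ r)) *
    (-e4F μ σ r q b y) ^ (gam1 μ σ r/(gam1 μ σ r - gam2 μ σ r))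

/-- `Λ(b,y) = −e₄(b,y)/e₃(b,y)`. -/
noncomputable def Lamfun (μ σ r q b y : ℝ) : ℝ := -e4F μ σ r q b y / e3F μ σ r q b y

/-- `L(y)`. -/
noncomputable def Lfun (μ σ r q y : ℝ) : ℝ :=
  (1/(gam1 μ σ r - gam2 μ σ r)) *
    Real.log ((gam2 μ σ r)^2/(gam1 μ σ r)^2 * Lamfun μ σ r q y y) - y

/-! Put `m = μ/σ²` and `s_ρ = √(μ²/σ⁴ + 2ρ/σ²)`, so that `γ₁,₂(ρ) = ±s_ρ − m` and
`0 < m < s_r < s_{r+q}`. Then `b*_ρ = log((s+m)²/(s−m)²)/(2s)` at `s = s_ρ`, a strictly decreasing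
function of `s > m`; this gives `b*_{r+q} < b*_r`. With `X = δ' − γ₁(r)δ` and `Y = δ' − γ₂(r)δ`,
`b*(y) − b*_r = y + log(X/Y)/(2s_r)`, so the second inequality is `Y < X e^{2 s_r y}`. Writing
`s = s_r`, `S = s_{r+q}`, the difference `X e^{2sy} − Y` equals
`2e^{(s−m)y} ((S−s) sinh((S+s)y) − (S+s) sinh((S−s)y))`, which is positive because `sinh x / x`
is strictly increasing on `(0, ∞)`, sinh being strictly convex there. -/

lemma strictConvexOn_sinh : StrictConvexOn ℝ (Ici 0) sinh := by
  refine strictConvexOn_of_deriv2_pos (convex_Ici 0) continuous_sinh.continuousOn fun x hx => ?_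
  rw [interior_Ici] at hx
  simpa [Real.deriv_sinh, Real.deriv_cosh] using hx

lemma strictMonoOn_sinh_div : StrictMonoOn (fun x => sinh x / x) (Ioi 0) := by
  intro x hx y hy hxy
  simpa using strictConvexOn_sinh.secant_strict_mono (a := 0) self_mem_Ici (mem_Ici.2 hx.le)
    (mem_Ici.2 hy.le) (ne_of_gt hx) (ne_of_gt hy) hxy

lemma strictAntiOn_log_sq_div {m : ℝ} (hm : 0 < m) : StrictAntiOn
    (fun s => Real.log ((s + m) ^ 2 / (s - m) ^ 2) / (2 * s)) (Ioi m) := by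
  intro s hs S hS hsS
  simp only [mem_Ioi] at hs hS
  have ratio_gt_one : 1 < (S + m) ^ 2 / (S - m) ^ 2 := by
    rw [one_lt_div (by nlinarith)]
    nlinarith
  have ratio_lt : (S + m) ^ 2 / (S - m) ^ 2 < (s + m) ^ 2 / (s - m) ^ 2 := by
    rw [← div_pow, ← div_pow]
    refine pow_lt_pow_left₀ ?_ (div_nonneg (by linarith) (by linarith)) two_ne_zero
    rw [div_lt_div_iff₀ (by linarith) (by linarith)]
    nlinarith
  calc Real.log ((S + m) ^ 2 / (S - m) ^ 2) / (2 * S)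
      < Real.log ((S + m) ^ 2 / (S - m) ^ 2) / (2 * s) :=
        div_lt_div_of_pos_left (Real.log_pos ratio_gt_one) (by linarith) (by linarith)
    _ < Real.log ((s + m) ^ 2 / (s - m) ^ 2) / (2 * s) := by
        gcongr
        linarith

lemma mul_exp_add_mul_exp_lt (m : ℝ) {s S y : ℝ} (hs : 0 < s) (hsS : s < S) (hy : 0 < y) :
    (S + s) * exp ((S - m) * y) + (S - s) * exp ((-S - m) * y) <
      ((S - s) * exp ((S - m) * y) + (S + s) * exp ((-S - m) * y)) * exp (2 * s * y) := by
  have key : (S + s) * sinh ((S - s) * y) < (S - s) * sinh ((S + s) * y) := by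
    have h := strictMonoOn_sinh_div (mul_pos (sub_pos.2 hsS) hy)
      (mul_pos (by linarith : 0 < S + s) hy) (by nlinarith)
    dsimp only at h
    rw [div_lt_div_iff₀ (by nlinarith) (by nlinarith)] at h
    nlinarith
  have expand : ((S - s) * exp ((S - m) * y) + (S + s) * exp ((-S - m) * y)) * exp (2 * s * y)
      - ((S + s) * exp ((S - m) * y) + (S - s) * exp ((-S - m) * y))
      = 2 * exp ((s - m) * y) * ((S - s) * sinh ((S + s) * y) - (S + s) * sinh ((S - s) * y)) := by
    rw [show 2 * s * y = s * y + s * y by ring]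
    simp only [Real.sinh_eq, sub_mul, add_mul, neg_mul, Real.exp_add, Real.exp_sub, Real.exp_neg]
    field_simp
    ring
  have := exp_pos ((s - m) * y)
  nlinarith

noncomputable def halfGap (μ σ ρ : ℝ) : ℝ := √(μ ^ 2 / σ ^ 4 + 2 * ρ / σ ^ 2)

lemma gam1_eq (μ σ ρ : ℝ) : gam1 μ σ ρ = halfGap μ σ ρ - μ / σ ^ 2 := rfl

lemma gam2_eq (μ σ ρ : ℝ) : gam2 μ σ ρ = -halfGap μ σ ρ - μ / σ ^ 2 := rfl

lemma abs_div_sq_lt_halfGap (μ : ℝ) {σ ρ : ℝ} (hσ : σ ≠ 0) (hρ : 0 < ρ) :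
    |μ / σ ^ 2| < halfGap μ σ ρ := by
  rw [← Real.sqrt_sq_eq_abs]
  refine Real.sqrt_lt_sqrt (sq_nonneg _) ?_
  rw [div_pow, ← pow_mul]
  have : 0 < 2 * ρ / σ ^ 2 := by positivity
  linarith

lemma div_sq_lt_halfGap (μ : ℝ) {σ ρ : ℝ} (hσ : σ ≠ 0) (hρ : 0 < ρ) :
    μ / σ ^ 2 < halfGap μ σ ρ :=
  (le_abs_self _).trans_lt (abs_div_sq_lt_halfGap μ hσ hρ)

lemma gam1_pos (μ : ℝ) {σ ρ : ℝ} (hσ : σ ≠ 0) (hρ : 0 < ρ) : 0 < gam1 μ σ ρ :=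
  sub_pos.2 (div_sq_lt_halfGap μ hσ hρ)

lemma gam2_neg (μ : ℝ) {σ ρ : ℝ} (hσ : σ ≠ 0) (hρ : 0 < ρ) : gam2 μ σ ρ < 0 := by
  rw [gam2_eq]
  linarith [neg_abs_le (μ / σ ^ 2), abs_div_sq_lt_halfGap μ hσ hρ]

lemma halfGap_pos (μ : ℝ) {σ ρ : ℝ} (hσ : σ ≠ 0) (hρ : 0 < ρ) : 0 < halfGap μ σ ρ :=
  Real.sqrt_pos.2 (by positivity)

lemma halfGap_lt_halfGap (μ : ℝ) {σ ρ ρ' : ℝ} (hσ : σ ≠ 0) (hρ : 0 ≤ ρ) (hρρ' : ρ < ρ') :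
    halfGap μ σ ρ < halfGap μ σ ρ' := by
  refine Real.sqrt_lt_sqrt (by positivity) ?_
  gcongr

lemma bstar_eq (μ σ ρ : ℝ) : bstar μ σ ρ =
    Real.log ((halfGap μ σ ρ + μ / σ ^ 2) ^ 2 / (halfGap μ σ ρ - μ / σ ^ 2) ^ 2) /
      (2 * halfGap μ σ ρ) := by
  rw [bstar, gam1_eq, gam2_eq]
  ring_nf

theorem bstar_add_lt_bstar {μ σ r q : ℝ} (hμ : 0 < μ) (hσ : σ ≠ 0) (hr : 0 < r) (hq : 0 < q) :
    bstar μ σ (r + q) < bstar μ σ r := by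
  rw [bstar_eq, bstar_eq]
  exact strictAntiOn_log_sq_div (by positivity) (div_sq_lt_halfGap μ hσ hr)
    (div_sq_lt_halfGap μ hσ (by positivity)) (halfGap_lt_halfGap μ hσ hr.le (by linarith))

lemma delP_sub_gam1_mul_del (μ σ r q y : ℝ) :
    delP μ σ r q y - gam1 μ σ r * del μ σ r q y =
      (halfGap μ σ (r + q) - halfGap μ σ r) * exp ((halfGap μ σ (r + q) - μ / σ ^ 2) * y) +
        (halfGap μ σ (r + q) + halfGap μ σ r) * exp ((-halfGap μ σ (r + q) - μ / σ ^ 2) * y) := by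
  rw [delP, del, gam1_eq, gam1_eq, gam2_eq]
  ring

lemma delP_sub_gam2_mul_del (μ σ r q y : ℝ) :
    delP μ σ r q y - gam2 μ σ r * del μ σ r q y =
      (halfGap μ σ (r + q) + halfGap μ σ r) * exp ((halfGap μ σ (r + q) - μ / σ ^ 2) * y) +
        (halfGap μ σ (r + q) - halfGap μ σ r) * exp ((-halfGap μ σ (r + q) - μ / σ ^ 2) * y) := by
  rw [delP, del, gam2_eq, gam1_eq, gam2_eq]
  ring

theorem bstar_lt_bstarY {μ σ r q y : ℝ} (hσ : σ ≠ 0) (hr : 0 < r) (hq : 0 < q) (hy : 0 < y) :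
    bstar μ σ r < bstarY μ σ r q y := by
  set s := halfGap μ σ r
  set S := halfGap μ σ (r + q)
  have hs : 0 < s := halfGap_pos μ hσ hr
  have hsS : s < S := halfGap_lt_halfGap μ hσ hr.le (by linarith)
  set X := delP μ σ r q y - gam1 μ σ r * del μ σ r q y with hX
  set Y := delP μ σ r q y - gam2 μ σ r * del μ σ r q y with hY
  rw [delP_sub_gam1_mul_del] at hX
  rw [delP_sub_gam2_mul_del] at hY
  have hX0 : 0 < X := by
    rw [hX]
    exact add_pos (mul_pos (sub_pos.2 hsS) (exp_pos _)) (mul_pos (by linarith) (exp_pos _))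
  have hY0 : 0 < Y := by
    rw [hY]
    exact add_pos (mul_pos (by linarith) (exp_pos _)) (mul_pos (sub_pos.2 hsS) (exp_pos _))
  have hYX : Y < X * exp (2 * s * y) := by
    rw [hX, hY]; exact mul_exp_add_mul_exp_lt _ hs hsS hy
  have hgap : gam1 μ σ r - gam2 μ σ r = 2 * s := by rw [gam1_eq, gam2_eq]; ring
  have hg1 := gam1_pos μ hσ hr
  have hg2 := gam2_neg μ hσ hr
  have hlog : -(2 * s * y) < Real.log (X / Y) := by
    rw [Real.lt_log_iff_exp_lt (div_pos hX0 hY0), lt_div_iff₀ hY0, Real.exp_neg,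
      inv_mul_lt_iff₀ (exp_pos _)]
    linarith
  have hDelta : DeltaF μ σ r q y = bstar μ σ r + Real.log (X / Y) / (2 * s) := by
    rw [DeltaF, bstar, hgap, mul_div_mul_comm, Real.log_mul
      (div_ne_zero (pow_ne_zero 2 hg2.ne) (pow_ne_zero 2 hg1.ne')) (div_pos hX0 hY0).ne']
    ring
  rw [bstarY, hDelta]
  have hshift : -y < Real.log (X / Y) / (2 * s) := by
    rw [lt_div_iff₀ (by positivity)]
    linarith
  linarith

/-- for all `y > 0`, `b*_{r+q} < b*_r < b*(y)`. -/
theorem stmt11 (μ σ r q : ℝ) (hμ : 0 < μ) (hσ : 0 < σ) (hr : 0 < r) (hq : 0 < q)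
    (y : ℝ) (hy : 0 < y) :
    bstar μ σ (r+q) < bstar μ σ r ∧ bstar μ σ r < bstarY μ σ r q y :=
  ⟨bstar_add_lt_bstar hμ hσ.ne' hr hq, bstar_lt_bstarY hσ.ne' hr hq hy⟩
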